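/- arXiv:2504.02584 — 4 statements merged into one kernel-verified Lean document; each statement's English description precedes it below -/
import Mathlib

section
/- Let J ⊆ S and let w ∈ ^{τ(J)}W (i.e. ℓ(yw) = ℓ(y) + ℓ(w) for all y ∈ W_{τ(J)}), and let w_J be an element of minimal length in the double coset W_{τ(J)} w W_J. If {w_J s w_J⁻¹ : s ∈ J} = τ(J), then w = w_J; in particular {w s w⁻¹ : s ∈ J} = τ(J). -/
/-- Let `(W,S)` be a finite Coxeter system with length function `ℓ`,
`τ : W → W` a group automorphism with `τ(S) = S`, `J ⊆ S`,
`w ∈ ^{τ(J)}W` (i.e. `ℓ(yw) = ℓ(y) + ℓ(w)` for all `y ∈ W_{τ(J)}`), and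
`wJ` an element of minimal length in the double coset `W_{τ(J)} w W_J`.
If `{wJ s wJ⁻¹ : s ∈ J} = τ(J)`, then `w = wJ`; in particular
`{w s w⁻¹ : s ∈ J} = τ(J)`. -/
theorem stmt0 {B : Type*} {W : Type*} [Group W] [Finite W] {M : CoxeterMatrix B}
    (cs : CoxeterSystem M W)
    (τ : W ≃* W) (hτ : τ '' (Set.range cs.simple) = Set.range cs.simple)
    (J : Set W) (hJ : J ⊆ Set.range cs.simple)
    (w : W)
    (hw : ∀ y ∈ Subgroup.closure (τ '' J), cs.length (y * w) = cs.length y + cs.length w)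
    (wJ : W)
    (hwJmem : ∃ y ∈ Subgroup.closure (τ '' J), ∃ z ∈ Subgroup.closure J, wJ = y * w * z)
    (hwJmin : ∀ y ∈ Subgroup.closure (τ '' J), ∀ z ∈ Subgroup.closure J,
      cs.length wJ ≤ cs.length (y * w * z))
    (hcond : (fun s => wJ * s * wJ⁻¹) '' J = τ '' J) :
    w = wJ ∧ (fun s => w * s * w⁻¹) '' J = τ '' J := by
  obtain ⟨y, hy, z, hz, hwJ⟩ := hwJmem
  have hmap : Subgroup.closure (τ '' J)
      = (Subgroup.closure J).map (MulAut.conj wJ).toMonoidHom := by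
    rw [MonoidHom.map_closure, ← hcond]
    congr 1
  have hz' : wJ * z⁻¹ * wJ⁻¹ ∈ Subgroup.closure (τ '' J) := by
    rw [hmap]
    exact ⟨z⁻¹, inv_mem hz, by simp [MulAut.conj_apply, mul_assoc]⟩
  set y' : W := y⁻¹ * (wJ * z⁻¹ * wJ⁻¹) with hy'def
  have hy' : y' ∈ Subgroup.closure (τ '' J) := mul_mem (inv_mem hy) hz'
  have hweq : w = y' * wJ := by rw [hy'def, hwJ]; group
  have hlen : cs.length wJ = cs.length y'⁻¹ + cs.length w := by
    have h := hw y'⁻¹ (inv_mem hy')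
    rw [← h]
    congr 1
    rw [hweq]; group
  have hle : cs.length wJ ≤ cs.length w := by
    have h := hwJmin 1 (one_mem _) 1 (one_mem _)
    simpa using h
  have h0 : cs.length y'⁻¹ = 0 := by omega
  have hy1 : y' = 1 := by
    have h1 := cs.length_eq_zero_iff.mp h0
    simpa using h1
  have hww : w = wJ := by rw [hweq, hy1, one_mul]
  exact ⟨hww, by rw [hww]; exact hcond⟩
end

section
/- 𝒲_J is a subgroup of W, and ^J_*W = 𝒲_J. -/
/-!
The sign representation of `W` on `W × ℤˣ`, in which `s i` conjugates the first coordinate and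
flips the sign exactly at `s i`, gives a cocycle `inversionSign` whose value `-1` detects right
inversions; this is the strong exchange condition. If `w` has no right inversion in `W_J` then
`ℓ (w * u) = ℓ w + ℓ u` for `u ∈ W_J`, and the cocycle identity shows that the elements of the
normalizer with this property are closed under products, so `𝒲_J` is a subgroup.

For `w ∈ 𝒲_J`, additivity on the left follows by inverting, `w` is the shortest element of
`W_J w W_J`, and conjugation by `w` sends `J` to length-one elements of `W_J`, which lie in `J` by
the exchange condition. Conversely, `w ∈ ^J_*W` normalizes `W_J` because `w_J` does, and
additivity on the left makes it minimal in `w W_J`.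
-/

section SignedConj

open Finset

variable {G : Type*} [Group G]

open Classical

noncomputable def signedConj (x : G) (p : G × ℤˣ) : G × ℤˣ :=
  (x * p.1 * x⁻¹, if p.1 = x then -p.2 else p.2)

theorem conj_eq_iff_eq_conj_inv {x t y : G} : x * t * x⁻¹ = y ↔ t = x⁻¹ * y * x := by
  constructor <;> rintro rfl <;> group

theorem signedConj_involutive {x : G} (hx : x * x = 1) : Function.Involutive (signedConj x) := by
  have hinv : x⁻¹ = x := inv_eq_of_mul_eq_one_right hx
  have hfix (t : G) : x * t * x⁻¹ = x ↔ t = x := by rw [conj_eq_iff_eq_conj_inv]; group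
  rintro ⟨t, ε⟩
  refine Prod.ext ?_ ?_
  · simp only [signedConj, hinv, ← mul_assoc, hx, one_mul]
    simp only [mul_assoc, hx, mul_one]
  · by_cases h : t = x <;> simp [signedConj, hfix, h]

theorem signedConj_comp_iterate {a b : G} (ha : a * a = 1) (hb : b * b = 1) (k : ℕ)
    (t : G) (ε : ℤˣ) :
    (signedConj a ∘ signedConj b)^[k] (t, ε) = ((a * b) ^ k * t * ((a * b) ^ k)⁻¹,
      ε * ∏ q ∈ range (2 * k), if t = b * (a * b) ^ q then -1 else 1) := by
  have ha' : a⁻¹ = a := inv_eq_of_mul_eq_one_right ha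
  have hb' : b⁻¹ = b := inv_eq_of_mul_eq_one_right hb
  have hconj (k : ℕ) : ((a * b) ^ k)⁻¹ * b * (a * b) ^ k = b * (a * b) ^ (2 * k) := by
    have hinvert : b * (a * b) ^ k * b⁻¹ = ((a * b) ^ k)⁻¹ := by
      rw [← conj_pow, ← inv_pow, mul_inv_rev, ha', hb']
      simp only [mul_assoc, hb, mul_one]
    rw [← hinvert, two_mul, pow_add]
    group
  induction k with
  | zero => simp
  | succ k ih =>
    rw [Function.iterate_succ_apply', ih]
    have hb_iff : (a * b) ^ k * t * ((a * b) ^ k)⁻¹ = b ↔ t = b * (a * b) ^ (2 * k) := by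
      rw [conj_eq_iff_eq_conj_inv, hconj]
    have ha_iff : b * ((a * b) ^ k * t * ((a * b) ^ k)⁻¹) * b⁻¹ = a ↔
        t = b * (a * b) ^ (2 * k + 1) := by
      have hfix : ((a * b) ^ k)⁻¹ * (a * b) * (a * b) ^ k = a * b := by
        rw [mul_assoc, ← pow_succ', pow_succ]
        group
      have : ((a * b) ^ k)⁻¹ * (b⁻¹ * a * b) * (a * b) ^ k = b * (a * b) ^ (2 * k + 1) := by
        calc _ = (((a * b) ^ k)⁻¹ * b * (a * b) ^ k) *
              (((a * b) ^ k)⁻¹ * (a * b) * (a * b) ^ k) := by rw [hb']; group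
          _ = _ := by rw [hconj, hfix, pow_succ, mul_assoc]
      rw [conj_eq_iff_eq_conj_inv, conj_eq_iff_eq_conj_inv, this]
    simp only [Function.comp_apply, signedConj, hb_iff, ha_iff,
      show 2 * (k + 1) = 2 * k + 1 + 1 by ring, prod_range_succ]
    refine Prod.ext ?_ ?_
    · simp only [pow_succ', mul_inv_rev, mul_assoc]
    · split_ifs <;> simp

theorem signedConj_comp_iterate_eq_id {a b : G} (ha : a * a = 1) (hb : b * b = 1) {m : ℕ}
    (hm : (a * b) ^ m = 1) : (signedConj a ∘ signedConj b)^[m] = id := by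
  funext ⟨t, ε⟩
  rw [signedConj_comp_iterate ha hb, two_mul, prod_range_add]
  simp only [pow_add, hm, one_mul, inv_one, mul_one, Int.units_mul_self, id_eq]

end SignedConj

namespace CoxeterSystem

variable {B W : Type*} [Group W] {M : CoxeterMatrix B} (cs : CoxeterSystem M W)

local prefix:100 "s" => cs.simple
local prefix:100 "π" => cs.wordProd
local prefix:100 "ℓ" => cs.length
local prefix:100 "ris" => cs.rightInvSeq

theorem isLiftable_signedConj :
    M.IsLiftable fun i => (signedConj_involutive (cs.simple_mul_simple_self i)).toPerm :=
  fun i i' => Equiv.ext fun p => by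
    simpa [Equiv.Perm.coe_pow] using
      congrFun (signedConj_comp_iterate_eq_id (cs.simple_mul_simple_self i)
        (cs.simple_mul_simple_self i') (cs.simple_mul_simple_pow i i')) p

noncomputable def signedConjRep : W →* Equiv.Perm (W × ℤˣ) :=
  cs.lift ⟨_, cs.isLiftable_signedConj⟩

noncomputable def inversionSign (w t : W) : ℤˣ :=
  (cs.signedConjRep w (t, 1)).2

theorem coe_signedConjRep_simple (i : B) : ⇑(cs.signedConjRep (s i)) = signedConj (s i) := by
  rw [signedConjRep, cs.lift_apply_simple]
  rfl

theorem signedConjRep_apply (w t : W) (ε : ℤˣ) :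
    cs.signedConjRep w (t, ε) = (w * t * w⁻¹, ε * cs.inversionSign w t) := by
  induction w using cs.simple_induction_left generalizing t ε with
  | one => simp only [inversionSign, map_one, Equiv.Perm.one_apply, one_mul, inv_one, mul_one]
  | mul_simple_left w i ih =>
    rw [inversionSign, map_mul, Equiv.Perm.mul_apply, Equiv.Perm.mul_apply, ih, ih,
      coe_signedConjRep_simple]
    simp only [signedConj, one_mul]
    refine Prod.ext (by group) ?_
    split_ifs <;> simp

theorem inversionSign_mul (x y t : W) :
    cs.inversionSign (x * y) t = cs.inversionSign y t * cs.inversionSign x (y * t * y⁻¹) := by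
  rw [inversionSign, map_mul, Equiv.Perm.mul_apply, signedConjRep_apply, signedConjRep_apply,
    one_mul]

theorem inversionSign_one (t : W) : cs.inversionSign 1 t = 1 := by
  simp [inversionSign]

open Classical in
theorem inversionSign_simple (i : B) (t : W) :
    cs.inversionSign (s i) t = if t = s i then -1 else 1 := by
  simp [inversionSign, coe_signedConjRep_simple, signedConj, apply_ite]

open Classical in
theorem inversionSign_wordProd (ω : List B) (t : W) :
    cs.inversionSign (π ω) t = (-1) ^ (ris ω).count t := by
  induction ω with
  | nil => simp [inversionSign_one]
  | cons i ω ih =>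
    rw [show ris (i :: ω) = (π ω)⁻¹ * s i * π ω :: ris ω from rfl, wordProd_cons,
      inversionSign_mul, ih, inversionSign_simple, List.count_cons, pow_add,
      conj_eq_iff_eq_conj_inv]
    split_ifs with h1 h2 h2 <;> simp_all

theorem inversionSign_self {t : W} (ht : cs.IsReflection t) : cs.inversionSign t t = -1 := by
  obtain ⟨v, i, rfl⟩ := ht
  have h1 := cs.inversionSign_mul (v * s i) v⁻¹ (v * s i * v⁻¹)
  have h2 := cs.inversionSign_mul v (s i) (s i)
  have h3 := cs.inversionSign_mul v⁻¹ v (s i)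
  simp only [inv_mul_cancel, inversionSign_one, inv_inv, cs.inv_simple,
    cs.simple_mul_simple_cancel_right] at h1 h2 h3
  rw [show v⁻¹ * (v * s i * v⁻¹) * v = s i by group, h2, inversionSign_simple, if_pos rfl] at h1
  rw [h1, mul_comm, mul_assoc, ← h3, mul_one]

variable {cs} in
theorem IsReduced.inversionSign_eq_neg_one_iff {ω : List B} (hω : cs.IsReduced ω) (t : W) :
    cs.inversionSign (π ω) t = -1 ↔ t ∈ ris ω := by
  classical
  rw [inversionSign_wordProd]
  by_cases ht : t ∈ ris ω
  · simp [ht, List.count_eq_one_of_mem hω.nodup_rightInvSeq ht]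
  · simp [ht, List.count_eq_zero_of_not_mem ht]

theorem inversionSign_eq_neg_one_iff (w t : W) :
    cs.inversionSign w t = -1 ↔ cs.IsRightInversion w t := by
  have sound (w : W) : cs.inversionSign w t = -1 → cs.IsRightInversion w t := by
    obtain ⟨ω, hω, rfl⟩ := cs.exists_isReduced w
    exact fun h =>
      cs.isRightInversion_of_mem_rightInvSeq hω ((hω.inversionSign_eq_neg_one_iff t).1 h)
  refine ⟨sound w, fun ⟨ht, hlt⟩ => ?_⟩
  refine (Int.units_eq_one_or _).resolve_left fun h => ?_
  -- otherwise the cocycle makes `t` a right inversion of `w * t`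
  have hwt : cs.inversionSign (w * t) t = -1 := by
    rw [inversionSign_mul, inversionSign_self cs ht, ht.mul_self, one_mul, ht.inv, h, mul_one]
  have := (sound _ hwt).2
  rw [mul_assoc, ht.mul_self, mul_one] at this
  omega

theorem inversionSign_eq_one_iff {t : W} (ht : cs.IsReflection t) (w : W) :
    cs.inversionSign w t = 1 ↔ ℓ w < ℓ (w * t) := by
  have hne := ht.length_mul_left_ne w
  rcases Int.units_eq_one_or (cs.inversionSign w t) with h | h
  · have := mt (cs.inversionSign_eq_neg_one_iff w t).2 (by rw [h]; decide)
    simp only [IsRightInversion, ht, true_and, not_lt] at this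
    exact iff_of_true h (by omega)
  · have := ((cs.inversionSign_eq_neg_one_iff w t).1 h).2
    exact iff_of_false (by rw [h]; decide) (by omega)

variable {cs} in
theorem IsReduced.mem_rightInvSeq_iff {ω : List B} (hω : cs.IsReduced ω) (t : W) :
    t ∈ ris ω ↔ cs.IsRightInversion (π ω) t :=
  (hω.inversionSign_eq_neg_one_iff t).symm.trans (cs.inversionSign_eq_neg_one_iff _ t)

section Parabolic

open Subgroup

variable {cs} {J : Set W}

@[elab_as_elim]
theorem closure_induction_right_simple (hJ : J ⊆ Set.range cs.simple) {p : W → Prop} (one : p 1)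
    (mul_simple : ∀ x ∈ closure J, ∀ i, s i ∈ J → p x → p (x * s i))
    {u : W} (hu : u ∈ closure J) : p u := by
  induction hu using Subgroup.closure_induction_right with
  | one => exact one
  | mul_right x hx y hy ih =>
    obtain ⟨i, rfl⟩ := hJ hy
    exact mul_simple x hx i hy ih
  | mul_inv_cancel x hx y hy ih =>
    obtain ⟨i, rfl⟩ := hJ hy
    rw [cs.inv_simple]
    exact mul_simple x hx i hy ih

theorem exists_isReduced_of_mem_closure (hJ : J ⊆ Set.range cs.simple) {u : W}
    (hu : u ∈ closure J) : ∃ ω : List B, (∀ i ∈ ω, s i ∈ J) ∧ cs.IsReduced ω ∧ π ω = u := by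
  refine closure_induction_right_simple hJ ?_ ?_ hu
  · exact ⟨[], by simp, by simp [IsReduced], by simp⟩
  rintro _ - i hi ⟨ω, hωJ, hω, rfl⟩
  rcases cs.length_mul_simple (π ω) i with hlong | hshort
  · refine ⟨ω ++ [i], by simpa [or_imp, forall_and] using ⟨hωJ, hi⟩, ?_, by simp [wordProd_append]⟩
    rw [IsReduced, wordProd_append, wordProd_singleton, hlong, hω.eq, List.length_append,
      List.length_singleton]
  · -- exchange condition: `s i` is a right inversion of `π ω`, so it can be cancelled in `ω`
    have hmem : s i ∈ ris ω := (hω.mem_rightInvSeq_iff _).2 ⟨cs.isReflection_simple i, by omega⟩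
    obtain ⟨l, hl, hget⟩ := List.mem_iff_getElem.1 hmem
    have hdel := cs.wordProd_mul_getD_rightInvSeq ω l
    rw [List.getD_eq_getElem _ _ hl, hget] at hdel
    refine ⟨ω.eraseIdx l, fun j hj => hωJ j (List.mem_of_mem_eraseIdx hj), ?_, hdel.symm⟩
    rw [cs.length_rightInvSeq] at hl
    rw [IsReduced, ← hdel, List.length_eraseIdx_of_lt hl, ← hω.eq]
    omega

theorem mem_of_mem_closure_of_length_eq_one (hJ : J ⊆ Set.range cs.simple) {u : W}
    (hu : u ∈ closure J) (h : ℓ u = 1) : u ∈ J := by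
  obtain ⟨ω, hωJ, hω, rfl⟩ := exists_isReduced_of_mem_closure hJ hu
  obtain ⟨i, rfl⟩ := List.length_eq_one_iff.1 (hω.eq.symm.trans h)
  simpa using hωJ i (by simp)

theorem length_mul_eq_add_of_forall_reflection (hJ : J ⊆ Set.range cs.simple) {w : W}
    (hw : ∀ t ∈ closure J, cs.IsReflection t → ℓ w < ℓ (w * t)) {u : W} (hu : u ∈ closure J) :
    ℓ (w * u) = ℓ w + ℓ u := by
  refine closure_induction_right_simple hJ ?_ (fun x hx i hi ih => ?_) hu
  · simp
  have hwx := cs.length_mul_simple (w * x) i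
  rw [← mul_assoc]
  rcases cs.length_mul_simple x i with hlong | hshort
  · -- a descent of `w * x` at `s i` would be an inversion `x * s i * x⁻¹ ∈ W_J` of `w`
    have hrefl := (cs.isReflection_simple i).conj x
    have hx1 := (cs.inversionSign_eq_one_iff (cs.isReflection_simple i) x).2 (by omega)
    have hwx1 : cs.inversionSign (w * x) (s i) = 1 := by
      rw [inversionSign_mul, hx1, one_mul, cs.inversionSign_eq_one_iff hrefl]
      exact hw _ (mul_mem (mul_mem hx (subset_closure hi)) (inv_mem hx)) hrefl
    rw [cs.inversionSign_eq_one_iff (cs.isReflection_simple i)] at hwx1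
    omega
  · have := cs.length_mul_le w (x * s i)
    rw [← mul_assoc] at this
    omega

theorem lt_length_mul_of_minimal {H : Subgroup W} {w : W}
    (hmin : ∀ u ∈ H, ℓ w ≤ ℓ (w * u)) {t : W} (ht : t ∈ H) (hrefl : cs.IsReflection t) :
    ℓ w < ℓ (w * t) :=
  lt_of_le_of_ne (hmin t ht) (hrefl.length_mul_left_ne w).symm

theorem length_mul_eq_add_of_minimal (hJ : J ⊆ Set.range cs.simple) {w : W}
    (hmin : ∀ u ∈ closure J, ℓ w ≤ ℓ (w * u)) {u : W} (hu : u ∈ closure J) :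
    ℓ (w * u) = ℓ w + ℓ u :=
  length_mul_eq_add_of_forall_reflection hJ (fun _ => lt_length_mul_of_minimal hmin) hu

end Parabolic

section Normalizer

open Subgroup

variable {cs} {J : Set W}

theorem minimal_inv_of_mem_normalizer {H : Subgroup W} {w : W} (hN : w ∈ normalizer (H : Set W))
    (hmin : ∀ u ∈ H, ℓ w ≤ ℓ (w * u)) : ∀ u ∈ H, ℓ w⁻¹ ≤ ℓ (w⁻¹ * u) := by
  intro u hu
  calc ℓ w⁻¹ = ℓ w := cs.length_inv w
    _ ≤ ℓ (w * (w⁻¹ * u⁻¹ * w)) := hmin _ ((mem_normalizer_iff''.1 hN _).1 (inv_mem hu))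
    _ = ℓ (w⁻¹ * u) := by rw [← cs.length_inv]; congr 1; group

theorem minimal_mul (hJ : J ⊆ Set.range cs.simple) {x y : W}
    (hx : ∀ u ∈ closure J, ℓ x ≤ ℓ (x * u)) (hyN : y ∈ normalizer (closure J : Set W))
    (hy : ∀ u ∈ closure J, ℓ y ≤ ℓ (y * u)) : ∀ u ∈ closure J, ℓ (x * y) ≤ ℓ (x * y * u) := by
  -- an inversion `t ∈ W_J` of `x * y` would give the inversion `y * t * y⁻¹ ∈ W_J` of `x`
  have hrefl : ∀ t ∈ closure J, cs.IsReflection t → ℓ (x * y) < ℓ (x * y * t) := by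
    intro t ht hrefl
    rw [← cs.inversionSign_eq_one_iff hrefl, inversionSign_mul,
      (cs.inversionSign_eq_one_iff hrefl y).2 (lt_length_mul_of_minimal hy ht hrefl), one_mul,
      cs.inversionSign_eq_one_iff (hrefl.conj y)]
    exact lt_length_mul_of_minimal hx ((mem_normalizer_iff.1 hyN t).1 ht) (hrefl.conj y)
  intro u hu
  rw [length_mul_eq_add_of_forall_reflection hJ hrefl hu]
  omega

variable (cs) in
def normalizerMinReps (hJ : J ⊆ Set.range cs.simple) : Subgroup W where
  carrier := {w | w ∈ normalizer (closure J : Set W) ∧ ∀ u ∈ closure J, ℓ w ≤ ℓ (w * u)}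
  one_mem' := ⟨one_mem _, by simp⟩
  mul_mem' := fun ⟨hxN, hx⟩ ⟨hyN, hy⟩ => ⟨mul_mem hxN hyN, minimal_mul hJ hx hyN hy⟩
  inv_mem' := fun ⟨hN, hmin⟩ => ⟨inv_mem hN, minimal_inv_of_mem_normalizer hN hmin⟩

theorem length_mul_left_eq_add (hJ : J ⊆ Set.range cs.simple) {w : W}
    (hw : w ∈ cs.normalizerMinReps hJ) {y : W} (hy : y ∈ closure J) :
    ℓ (y * w) = ℓ y + ℓ w := by
  have := length_mul_eq_add_of_minimal hJ (inv_mem hw).2 (inv_mem hy)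
  rw [← cs.length_inv (y * w), mul_inv_rev, this, cs.length_inv, cs.length_inv, add_comm]

theorem mem_normalizerMinReps_of_length_mul_left (hJ : J ⊆ Set.range cs.simple) {w : W}
    (hN : w ∈ normalizer (closure J : Set W)) (hleft : ∀ y ∈ closure J, ℓ (y * w) = ℓ y + ℓ w) :
    w ∈ cs.normalizerMinReps hJ := by
  refine ⟨hN, fun u hu => ?_⟩
  have := hleft _ ((mem_normalizer_iff.1 hN u).1 hu)
  rw [show w * u * w⁻¹ * w = w * u by group] at this
  omega

theorem conj_mem_of_mem_normalizerMinReps (hJ : J ⊆ Set.range cs.simple) {w : W}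
    (hw : w ∈ cs.normalizerMinReps hJ) {r : W} (hr : r ∈ J) : w * r * w⁻¹ ∈ J := by
  obtain ⟨i, rfl⟩ := hJ hr
  have hu : w * s i * w⁻¹ ∈ closure J := (mem_normalizer_iff.1 hw.1 _).1 (subset_closure hr)
  refine mem_of_mem_closure_of_length_eq_one hJ hu ?_
  have h1 := length_mul_eq_add_of_minimal hJ hw.2 (subset_closure hr)
  have h2 := length_mul_left_eq_add hJ hw hu
  rw [show w * s i * w⁻¹ * w = w * s i by group, h1, length_simple] at h2
  omega

theorem normalizerMinReps_le_normalizer (hJ : J ⊆ Set.range cs.simple) :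
    cs.normalizerMinReps hJ ≤ normalizer J := by
  intro w hw
  refine mem_set_normalizer_iff.2 fun r => ⟨conj_mem_of_mem_normalizerMinReps hJ hw, fun h => ?_⟩
  simpa [mul_assoc] using conj_mem_of_mem_normalizerMinReps hJ (inv_mem hw) h

theorem eq_of_length_le_of_mem_normalizerMinReps (hJ : J ⊆ Set.range cs.simple) {w : W}
    (hw : w ∈ cs.normalizerMinReps hJ) {y z : W} (hy : y ∈ closure J) (hz : z ∈ closure J)
    (hle : ℓ (y * w * z) ≤ ℓ w) : y * w * z = w := by
  have hv : w⁻¹ * y * w * z ∈ closure J := mul_mem ((mem_normalizer_iff''.1 hw.1 y).1 hy) hz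
  have hyw : w * (w⁻¹ * y * w * z) = y * w * z := by group
  have := length_mul_eq_add_of_minimal hJ hw.2 hv
  rw [hyw] at this
  rw [← hyw, cs.length_eq_zero_iff.1 (by omega : ℓ (w⁻¹ * y * w * z) = 0), mul_one]

end Normalizer

end CoxeterSystem

open CoxeterSystem Subgroup

theorem stmt1_general {B : Type*} {W : Type*} [Group W] {M : CoxeterMatrix B}
    (cs : CoxeterSystem M W)
    (J : Set W) (hJ : J ⊆ Set.range cs.simple)
    (wJ : W → W)
    (hwJmem : ∀ w : W, ∃ y ∈ Subgroup.closure J, ∃ z ∈ Subgroup.closure J, wJ w = y * w * z)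
    (hwJmin : ∀ w : W, ∀ y ∈ Subgroup.closure J, ∀ z ∈ Subgroup.closure J,
      cs.length (wJ w) ≤ cs.length (y * w * z))
    -- the normalizer of `W_J` in `W`
    (NWJ : Set W) (hNWJ : NWJ = {w : W | (fun u => w * u * w⁻¹) '' (Subgroup.closure J : Set W)
      = (Subgroup.closure J : Set W)})
    -- `𝒲_J`: elements of the normalizer of minimal length in their `W_J`-coset
    (WWJ : Set W) (hWWJ : WWJ = {w ∈ NWJ | ∀ u ∈ Subgroup.closure J, cs.length w ≤ cs.length (w * u)})
    -- `^JW`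
    (JW : Set W) (hJW : JW = {w : W | ∀ y ∈ Subgroup.closure J,
      cs.length (y * w) = cs.length y + cs.length w})
    -- `^J_*W`
    (JWstar : Set W) (hJWstar : JWstar = {w ∈ JW | (fun s => (wJ w) * s * (wJ w)⁻¹) '' J = J}) :
    (∃ H : Subgroup W, (H : Set W) = WWJ) ∧ JWstar = WWJ := by
  subst hNWJ hWWJ hJW hJWstar
  have hWWJ : {w ∈ {w : W | (fun u => w * u * w⁻¹) '' (closure J : Set W) = closure J} |
      ∀ u ∈ closure J, cs.length w ≤ cs.length (w * u)} = cs.normalizerMinReps hJ := by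
    ext w
    exact and_congr_left' mem_normalizer_iff_conj_image_eq.symm
  refine ⟨⟨_, hWWJ.symm⟩, ?_⟩
  rw [hWWJ]
  ext w
  obtain ⟨y, hy, z, hz, hwJ⟩ := hwJmem w
  constructor
  · rintro ⟨hleft, himg⟩
    have hN : wJ w ∈ normalizer J := mem_normalizer_iff_conj_image_eq.2 himg
    refine mem_normalizerMinReps_of_length_mul_left hJ ?_ hleft
    rw [show w = y⁻¹ * wJ w * z⁻¹ by rw [hwJ]; group]
    exact mul_mem (mul_mem (le_normalizer (inv_mem hy)) (normalizer_le_normalizer_closure J hN))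
      (le_normalizer (inv_mem hz))
  · intro hw
    have hle : cs.length (wJ w) ≤ cs.length w := by
      simpa using hwJmin w 1 (one_mem _) 1 (one_mem _)
    have hfix : wJ w = w := by
      rw [hwJ] at hle ⊢
      exact eq_of_length_le_of_mem_normalizerMinReps hJ hw hy hz hle
    refine ⟨fun y hy => length_mul_left_eq_add hJ hw hy, ?_⟩
    rw [hfix]
    exact mem_normalizer_iff_conj_image_eq.1 (normalizerMinReps_le_normalizer hJ hw)

/-- Let `(W,S)` be a finite Coxeter system with length function `ℓ`,
`J ⊆ S`, and for `w ∈ W` let `wJ w` denote the (an) element of minimal length in the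
double coset `W_J w W_J`.  Let `NW_J` be the normalizer of `W_J` in `W` and let
`𝒲_J` be the set of elements of `NW_J` of minimal length in their coset `w W_J`.
Set `^JW = {w : ℓ(yw) = ℓ(y) + ℓ(w) ∀ y ∈ W_J}` and
`^J_*W = {w ∈ ^JW : (wJ w) J (wJ w)⁻¹ = J}`.
Then `𝒲_J` is a subgroup of `W` and `^J_*W = 𝒲_J`. -/
theorem stmt1 {B : Type*} {W : Type*} [Group W] [Finite W] {M : CoxeterMatrix B}
    (cs : CoxeterSystem M W)
    (J : Set W) (hJ : J ⊆ Set.range cs.simple)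
    (wJ : W → W)
    (hwJmem : ∀ w : W, ∃ y ∈ Subgroup.closure J, ∃ z ∈ Subgroup.closure J, wJ w = y * w * z)
    (hwJmin : ∀ w : W, ∀ y ∈ Subgroup.closure J, ∀ z ∈ Subgroup.closure J,
      cs.length (wJ w) ≤ cs.length (y * w * z))
    -- the normalizer of `W_J` in `W`
    (NWJ : Set W) (hNWJ : NWJ = {w : W | (fun u => w * u * w⁻¹) '' (Subgroup.closure J : Set W)
      = (Subgroup.closure J : Set W)})
    -- `𝒲_J`: elements of the normalizer of minimal length in their `W_J`-coset
    (WWJ : Set W) (hWWJ : WWJ = {w ∈ NWJ | ∀ u ∈ Subgroup.closure J, cs.length w ≤ cs.length (w * u)})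
    -- `^JW`
    (JW : Set W) (hJW : JW = {w : W | ∀ y ∈ Subgroup.closure J,
      cs.length (y * w) = cs.length y + cs.length w})
    -- `^J_*W`
    (JWstar : Set W) (hJWstar : JWstar = {w ∈ JW | (fun s => (wJ w) * s * (wJ w)⁻¹) '' J = J}) :
    (∃ H : Subgroup W, (H : Set W) = WWJ) ∧ JWstar = WWJ :=
  stmt1_general cs J hJ wJ hwJmem hwJmin NWJ hNWJ WWJ hWWJ JW hJW JWstar hJWstar
end

section
/- The following three conditions are equivalent: (i) the pair (A,A') is good; (ii) A ∩ A' = A^⊥ ∩ A'; (iii) A ∩ A' = A ∩ A'^⊥. -/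
open Module Submodule

variable {k V : Type*} [Field k] [AddCommGroup V] [Module k V]

/-- The orthogonal `A^⊥ = {x ∈ V : ⟨x,a⟩ = 0 ∀ a ∈ A}` of a subspace `A` of `V` with
respect to a bilinear form `B` on `V`. -/
def perp (B : V →ₗ[k] V →ₗ[k] k) (A : Submodule k V) : Submodule k V where
  carrier := {x | ∀ a ∈ A, B x a = 0}
  add_mem' := fun {x y} hx hy a ha => by
    simp [map_add, LinearMap.add_apply, hx a ha, hy a ha]
  zero_mem' := fun a ha => by simp
  smul_mem' := fun c x hx a ha => by
    simp [map_smul, LinearMap.smul_apply, hx a ha]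


lemma aux_mem_perp {B : V →ₗ[k] V →ₗ[k] k} {A : Submodule k V} {x : V} :
    x ∈ perp B A ↔ ∀ a ∈ A, B x a = 0 := Iff.rfl

lemma aux_perp_anti {B : V →ₗ[k] V →ₗ[k] k} {A A' : Submodule k V} (h : A ≤ A') :
    perp B A' ≤ perp B A := fun _ hx a ha => hx a (h ha)

lemma aux_perp_sup (B : V →ₗ[k] V →ₗ[k] k) (A A' : Submodule k V) :
    perp B (A ⊔ A') = perp B A ⊓ perp B A' := by
  apply le_antisymm
  · exact le_inf (aux_perp_anti le_sup_left) (aux_perp_anti le_sup_right)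
  · intro x hx a ha
    obtain ⟨h1, h2⟩ := Submodule.mem_inf.mp hx
    obtain ⟨b, hb, c, hc, rfl⟩ := Submodule.mem_sup.mp ha
    rw [map_add, h1 b hb, h2 c hc, add_zero]

lemma aux_skew {B : V →ₗ[k] V →ₗ[k] k} (halt : ∀ x : V, B x x = 0) (x y : V) :
    B x y = - B y x := by
  have h := halt (x + y)
  simp only [map_add, LinearMap.add_apply, halt x, halt y] at h
  linear_combination h

lemma aux_finrank_perp_add [FiniteDimensional k V] (B : V →ₗ[k] V →ₗ[k] k)
    (hnd : ∀ x : V, (∀ y : V, B x y = 0) → x = 0) (A : Submodule k V) :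
    finrank k (perp B A) + finrank k A = finrank k V := by
  set f : V →ₗ[k] Module.Dual k A := A.subtype.dualMap ∘ₗ B with hf
  have hker : LinearMap.ker f = perp B A := by
    ext x
    rw [LinearMap.mem_ker, aux_mem_perp]
    constructor
    · intro h a ha
      have := congrFun (congrArg DFunLike.coe h) ⟨a, ha⟩
      simpa [hf] using this
    · intro h
      ext a
      simpa [hf] using h a a.2
  have hBsurj : Function.Surjective (B : V →ₗ[k] Module.Dual k V) := by
    have hinj : Function.Injective (B : V →ₗ[k] Module.Dual k V) := by
      intro x y hxy
      have : x - y = 0 := by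
        apply hnd
        intro z
        have : B x z = B y z := by rw [hxy]
        simp [map_sub, this]
      exact sub_eq_zero.mp this
    have h1 : finrank k (LinearMap.range (B : V →ₗ[k] Module.Dual k V)) = finrank k V := by
      rw [LinearMap.finrank_range_of_inj hinj]
    have h2 : LinearMap.range (B : V →ₗ[k] Module.Dual k V) = ⊤ :=
      Submodule.eq_top_of_finrank_eq (by rw [h1, Subspace.dual_finrank_eq])
    exact LinearMap.range_eq_top.mp h2
  have hdualsurj : Function.Surjective (A.subtype.dualMap) :=
    LinearMap.dualMap_surjective_of_injective A.injective_subtype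
  have hfsurj : Function.Surjective f := hdualsurj.comp hBsurj
  have hrank := LinearMap.finrank_range_add_finrank_ker f
  rw [hker, LinearMap.range_eq_top.mpr hfsurj] at hrank
  rw [finrank_top, Subspace.dual_finrank_eq] at hrank
  omega

lemma aux_perp_perp [FiniteDimensional k V] (B : V →ₗ[k] V →ₗ[k] k)
    (halt : ∀ x : V, B x x = 0) (hnd : ∀ x : V, (∀ y : V, B x y = 0) → x = 0)
    (A : Submodule k V) : perp B (perp B A) = A := by
  have hle : A ≤ perp B (perp B A) := by
    intro x hx a ha
    rw [aux_skew halt, ha x hx, neg_zero]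
  refine (Submodule.eq_of_le_of_finrank_le hle ?_).symm
  have h1 := aux_finrank_perp_add B hnd A
  have h2 := aux_finrank_perp_add B hnd (perp B A)
  omega

lemma aux_exists_compl_within [FiniteDimensional k V] {D W : Submodule k V} (h : D ≤ W) :
    ∃ L : Submodule k V, L ≤ W ∧ Disjoint L D ∧ L ⊔ D = W := by
  obtain ⟨L', hL'⟩ := Submodule.exists_isCompl (D.comap W.subtype)
  refine ⟨L'.map W.subtype, Submodule.map_subtype_le _ _, ?_, ?_⟩
  · rw [disjoint_iff, eq_bot_iff]
    rintro x ⟨hxL, hxD⟩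
    obtain ⟨y, hy, rfl⟩ := hxL
    have hyD : y ∈ D.comap W.subtype := hxD
    have hz := Submodule.disjoint_def.mp hL'.disjoint y hyD hy
    simp [hz]
  · have hsup := hL'.sup_eq_top
    have : (D.comap W.subtype ⊔ L').map W.subtype = W := by
      rw [hsup, Submodule.map_top, Submodule.range_subtype]
    rw [Submodule.map_sup, Submodule.map_comap_subtype, inf_eq_right.mpr h] at this
    rw [sup_comm] at this
    exact this
/-- The pair `(A,A')` of isotropic subspaces is *good* if there is a subspace `L` with
`A^⊥ = L ⊕ A` and `A'^⊥ = L ⊕ A'` (internal direct sums). -/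
def IsGood (B : V →ₗ[k] V →ₗ[k] k) (A A' : Submodule k V) : Prop :=
  ∃ L : Submodule k V,
    (Disjoint L A ∧ L ⊔ A = perp B A) ∧ (Disjoint L A' ∧ L ⊔ A' = perp B A')

/-- Let `V` be a `2n`-dimensional symplectic vector space over `k` and let
`A, A'` be `t`-dimensional isotropic subspaces (`0 ≤ t ≤ n`).  The following three
conditions are equivalent: (i) `(A,A')` is good; (ii) `A ∩ A' = A^⊥ ∩ A'`;
(iii) `A ∩ A' = A ∩ A'^⊥`. -/
theorem stmt3 [FiniteDimensional k V] (n t : ℕ) (hn : 1 ≤ n) (htn : t ≤ n)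
    (B : V →ₗ[k] V →ₗ[k] k)
    (hdim : finrank k V = 2 * n)
    (halt : ∀ x : V, B x x = 0)
    (hnd : ∀ x : V, (∀ y : V, B x y = 0) → x = 0)
    (A A' : Submodule k V)
    (hA : A ≤ perp B A) (hA' : A' ≤ perp B A')
    (hdA : finrank k A = t) (hdA' : finrank k A' = t) :
    (IsGood B A A' ↔ A ⊓ A' = perp B A ⊓ A') ∧
    (IsGood B A A' ↔ A ⊓ A' = A ⊓ perp B A') := by
  have key : ∀ X : Submodule k V, finrank k (perp B X) + finrank k X = 2 * n := by
    intro X; rw [← hdim]; exact aux_finrank_perp_add B hnd X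
  set W : Submodule k V := perp B A ⊓ perp B A' with hW
  have hWsup : perp B (A ⊔ A') = W := aux_perp_sup B A A'
  have hAW : A ⊓ W = A ⊓ perp B A' := by
    rw [hW, ← inf_assoc, inf_eq_left.mpr hA]
  have hWA' : W ⊓ A' = perp B A ⊓ A' := by
    rw [hW, inf_assoc, inf_eq_right.mpr hA']
  have hsupAA' : finrank k ↥(A ⊔ A') + finrank k ↥(A ⊓ A') = 2 * t := by
    rw [Submodule.finrank_sup_add_finrank_inf_eq, hdA, hdA']; ring
  have hWdim : finrank k W + finrank k ↥(A ⊔ A') = 2 * n := by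
    rw [← hWsup]; exact key _
  -- e = e'
  have hee' : finrank k ↥(perp B A ⊓ A') = finrank k ↥(A ⊓ perp B A') := by
    have h1 : finrank k ↥(A ⊔ perp B A') + finrank k ↥(A ⊓ perp B A')
        = finrank k A + finrank k (perp B A') :=
      Submodule.finrank_sup_add_finrank_inf_eq _ _
    have h2 : perp B (A ⊔ perp B A') = perp B A ⊓ A' := by
      rw [aux_perp_sup, aux_perp_perp B halt hnd]
    have h3 := key (A ⊔ perp B A')
    rw [h2] at h3
    have h4 := key A'
    rw [hdA] at h1
    rw [hdA'] at h4
    omega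
  have hle2 : A ⊓ A' ≤ perp B A ⊓ A' := inf_le_inf_right A' hA
  have hle3 : A ⊓ A' ≤ A ⊓ perp B A' := inf_le_inf_left A hA'
  have h23 : (A ⊓ A' = perp B A ⊓ A') ↔ (A ⊓ A' = A ⊓ perp B A') := by
    constructor
    · intro h
      apply Submodule.eq_of_le_of_finrank_le hle3
      rw [← hee', ← h]
    · intro h
      apply Submodule.eq_of_le_of_finrank_le hle2
      rw [hee', ← h]
  have hgood2 : IsGood B A A' → A ⊓ A' = perp B A ⊓ A' := by
    rintro ⟨L, ⟨hLA, hLAsup⟩, ⟨hLA', hLA'sup⟩⟩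
    have hLperpA : L ≤ perp B A := hLAsup ▸ le_sup_left
    have hLperpA' : L ≤ perp B A' := hLA'sup ▸ le_sup_left
    have hLW : L ≤ W := le_inf hLperpA hLperpA'
    have hLdim : finrank k L + finrank k A = finrank k (perp B A) := by
      rw [← hLAsup, ← Submodule.finrank_sup_add_finrank_inf_eq L A, hLA.eq_bot,
        finrank_bot, add_zero]
    have hdisj : Disjoint L (W ⊓ A') := hLA'.mono_right inf_le_right
    have hsuple : L ⊔ (W ⊓ A') ≤ W := sup_le hLW inf_le_left
    have hsum : finrank k L + finrank k ↥(W ⊓ A') ≤ finrank k W := by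
      rw [← Submodule.finrank_sup_add_finrank_inf_eq L (W ⊓ A'), hdisj.eq_bot,
        finrank_bot, add_zero]
      exact Submodule.finrank_mono hsuple
    rw [hWA'] at hsum
    have hkeyA := key A
    rw [hdA] at hLdim hkeyA
    apply (Submodule.eq_of_le_of_finrank_le hle2 ?_)
    omega
  have h2good : (A ⊓ A' = perp B A ⊓ A') → (A ⊓ A' = A ⊓ perp B A') → IsGood B A A' := by
    intro h2 h3
    have hDW : A ⊓ A' ≤ W := le_inf (le_trans inf_le_left hA) (le_trans inf_le_right hA')
    obtain ⟨L, hLW, hLD, hLDsup⟩ := aux_exists_compl_within hDW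
    have hfL : finrank k W = finrank k L + finrank k ↥(A ⊓ A') := by
      rw [← hLDsup, ← Submodule.finrank_sup_add_finrank_inf_eq L (A ⊓ A'), hLD.eq_bot,
        finrank_bot, add_zero]
    have hdLA : Disjoint L A := by
      rw [disjoint_iff]
      have heq : L ⊓ A = L ⊓ (A ⊓ W) := by
        rw [inf_comm A W, ← inf_assoc, inf_eq_left.mpr hLW]
      rw [heq, hAW, ← h3]
      exact hLD.eq_bot
    have hdLA' : Disjoint L A' := by
      rw [disjoint_iff]
      have heq : L ⊓ A' = L ⊓ (W ⊓ A') := by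
        rw [← inf_assoc, inf_eq_left.mpr hLW]
      rw [heq, hWA', ← h2]
      exact hLD.eq_bot
    have hLperpA : L ≤ perp B A := le_trans hLW inf_le_left
    have hLperpA' : L ≤ perp B A' := le_trans hLW inf_le_right
    refine ⟨L, ⟨hdLA, ?_⟩, ⟨hdLA', ?_⟩⟩
    · apply Submodule.eq_of_le_of_finrank_le (sup_le hLperpA hA)
      have hfsup : finrank k ↥(L ⊔ A) = finrank k L + finrank k A := by
        rw [← Submodule.finrank_sup_add_finrank_inf_eq L A, hdLA.eq_bot,
          finrank_bot, add_zero]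
      have hkeyA := key A
      rw [hdA] at hfsup hkeyA
      omega
    · apply Submodule.eq_of_le_of_finrank_le (sup_le hLperpA' hA')
      have hfsup : finrank k ↥(L ⊔ A') = finrank k L + finrank k A' := by
        rw [← Submodule.finrank_sup_add_finrank_inf_eq L A', hdLA'.eq_bot,
          finrank_bot, add_zero]
      have hkeyA' := key A'
      rw [hdA'] at hfsup hkeyA'
      omega
  exact ⟨⟨hgood2, fun h2 => h2good h2 (h23.mp h2)⟩,
    ⟨fun g => h23.mp (hgood2 g), fun h3 => h2good (h23.mpr h3) h3⟩⟩
end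

section
/- The pair (A,A') is good if and only if A ∩ A' = A^⊥ ∩ A'^⊥ ∩ (A + A'). -/
open Module Submodule

variable {k V : Type*} [Field k] [AddCommGroup V] [Module k V]

/-!
Everything reduces to the lattice of subspaces, on which `A ↦ A^⊥` is an order-reversing
involution turning `⊔` into `⊓`. Both sides of the equivalence are then equivalent to
`A' ∩ A^⊥ ⊆ A` and `A ∩ A'^⊥ ⊆ A'`. If `L` witnesses goodness, `A' ⊆ L^⊥` because
`L ⊆ A'^⊥`, so `A' ∩ A^⊥ ⊆ L^⊥ ∩ A^⊥ = (L + A)^⊥ = A^⊥^⊥ = A`. Conversely, with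
`W = A^⊥ ∩ A'^⊥`, any complement `L` of `A ∩ A'` inside `W` works: `W ∩ A ⊆ A ∩ A'` gives
`L ∩ A = 0`, and `(W + A)^⊥ = (A + A') ∩ A^⊥ = A + (A' ∩ A^⊥) = A` gives `L + A = W + A = A^⊥`.
-/

theorem inf_eq_inf_inf_sup_iff {α : Type*} [Lattice α] [IsModularLattice α] {a a' p p' : α}
    (ha : a ≤ p) (ha' : a' ≤ p') :
    a ⊓ a' = p ⊓ p' ⊓ (a ⊔ a') ↔ a' ⊓ p ≤ a ∧ a ⊓ p' ≤ a' := by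
  constructor
  · intro h
    constructor
    · calc a' ⊓ p ≤ p ⊓ p' ⊓ (a ⊔ a') :=
            le_inf (le_inf inf_le_right (inf_le_left.trans ha')) (inf_le_left.trans le_sup_right)
        _ = a ⊓ a' := h.symm
        _ ≤ a := inf_le_left
    · calc a ⊓ p' ≤ p ⊓ p' ⊓ (a ⊔ a') :=
            le_inf (le_inf (inf_le_left.trans ha) inf_le_right) (inf_le_left.trans le_sup_left)
        _ = a ⊓ a' := h.symm
        _ ≤ a' := inf_le_right
  · rintro ⟨h, h'⟩
    refine le_antisymm (le_inf (le_inf (inf_le_left.trans ha) (inf_le_right.trans ha'))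
      (inf_le_left.trans le_sup_left)) (le_inf ?_ ?_)
    · calc p ⊓ p' ⊓ (a ⊔ a') ≤ (a ⊔ a') ⊓ p := le_inf inf_le_right (inf_le_left.trans inf_le_left)
        _ = a ⊔ a' ⊓ p := sup_inf_assoc_of_le a' ha
        _ ≤ a := sup_le le_rfl h
    · calc p ⊓ p' ⊓ (a ⊔ a') ≤ (a' ⊔ a) ⊓ p' :=
            le_inf (sup_comm a a' ▸ inf_le_right) (inf_le_left.trans inf_le_right)
        _ = a' ⊔ a ⊓ p' := sup_inf_assoc_of_le a ha'
        _ ≤ a' := sup_le le_rfl h'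

theorem disjoint_and_sup_eq_of_sup_eq {α : Type*} [Lattice α] [OrderBot α] {l c w a : α}
    (hl : Disjoint l c) (hlc : l ⊔ c = w) (hca : c ≤ a) (hwa : w ⊓ a ≤ c) :
    Disjoint l a ∧ l ⊔ a = w ⊔ a := by
  refine ⟨disjoint_iff_inf_le.mpr ?_, ?_⟩
  · calc l ⊓ a ≤ l ⊓ c := le_inf inf_le_left ((inf_le_inf_right a (hlc ▸ le_sup_left)).trans hwa)
      _ ≤ ⊥ := hl.le_bot
  · rw [← hlc, sup_assoc, sup_eq_right.mpr hca]

section Perp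

variable {B : V →ₗ[k] V →ₗ[k] k}

theorem perp_antitone : Antitone (perp B) := fun _ _ h _ hx a ha => hx a (h ha)

theorem perp_sup (A A' : Submodule k V) : perp B (A ⊔ A') = perp B A ⊓ perp B A' := by
  refine le_antisymm (le_inf (perp_antitone le_sup_left) (perp_antitone le_sup_right)) ?_
  rintro x ⟨hxA, hxA'⟩ _ hy
  obtain ⟨a, ha, a', ha', rfl⟩ := mem_sup.mp hy
  simp [hxA a ha, hxA' a' ha']

theorem le_perp_comm (hB : B.IsRefl) {A A' : Submodule k V} :
    A ≤ perp B A' ↔ A' ≤ perp B A :=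
  ⟨fun h _ hx _ ha => hB _ _ (h ha _ hx), fun h _ hx _ ha => hB _ _ (h ha _ hx)⟩

theorem perp_eq_orthogonal (hB : B.IsRefl) (A : Submodule k V) :
    perp B A = LinearMap.BilinForm.orthogonal B A :=
  ext fun _ => ⟨fun h a ha => hB _ _ (h a ha), fun h a ha => hB _ _ (h a ha)⟩

theorem perp_perp [FiniteDimensional k V] (hB : B.IsRefl) (hnd : B.SeparatingLeft)
    (A : Submodule k V) : perp B (perp B A) = A := by
  rw [perp_eq_orthogonal hB, perp_eq_orthogonal hB]
  exact LinearMap.BilinForm.orthogonal_orthogonal (hB.nondegenerate_iff_separatingLeft.mpr hnd)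
    hB A

variable [FiniteDimensional k V] (hB : B.IsRefl) (hnd : B.SeparatingLeft)
include hB hnd

theorem inf_perp_le_of_sup_eq_perp {L A A' : Submodule k V} (hLA' : L ≤ perp B A')
    (hLA : L ⊔ A = perp B A) : A' ⊓ perp B A ≤ A :=
  calc A' ⊓ perp B A ≤ perp B L ⊓ perp B A := inf_le_inf_right _ ((le_perp_comm hB).mp hLA')
    _ = A := by rw [← perp_sup, hLA, perp_perp hB hnd]

theorem perp_inf_perp_sup_eq_perp {A A' : Submodule k V} (hA : A ≤ perp B A)
    (h : A' ⊓ perp B A ≤ A) : perp B A ⊓ perp B A' ⊔ A = perp B A := by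
  have hperp : perp B (perp B A ⊓ perp B A' ⊔ A) = A := by
    rw [perp_sup, ← perp_sup A A', perp_perp hB hnd, sup_inf_assoc_of_le A' hA]
    exact sup_eq_left.mpr h
  exact (perp_perp hB hnd _).symm.trans (congrArg (perp B) hperp)

theorem isGood_iff {A A' : Submodule k V} (hA : A ≤ perp B A) (hA' : A' ≤ perp B A') :
    IsGood B A A' ↔ A' ⊓ perp B A ≤ A ∧ A ⊓ perp B A' ≤ A' := by
  constructor
  · rintro ⟨L, ⟨-, hLA⟩, -, hLA'⟩
    exact ⟨inf_perp_le_of_sup_eq_perp hB hnd (hLA' ▸ le_sup_left) hLA,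
      inf_perp_le_of_sup_eq_perp hB hnd (hLA ▸ le_sup_left) hLA'⟩
  · rintro ⟨h, h'⟩
    obtain ⟨L, -, hdisj, hsup⟩ := Set.Iic.complementedLattice_iff.mp inferInstance (A ⊓ A')
      (le_inf (inf_le_left.trans hA) (inf_le_right.trans hA') : A ⊓ A' ≤ perp B A ⊓ perp B A')
    have hL : Disjoint L (A ⊓ A') := (disjoint_iff.mpr hdisj).symm
    have hLC : L ⊔ A ⊓ A' = perp B A ⊓ perp B A' := (sup_comm _ _).trans hsup
    have hWA : perp B A ⊓ perp B A' ⊓ A ≤ A ⊓ A' :=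
      le_inf inf_le_right (h'.trans' (le_inf inf_le_right (inf_le_left.trans inf_le_right)))
    have hWA' : perp B A ⊓ perp B A' ⊓ A' ≤ A ⊓ A' :=
      le_inf (h.trans' (le_inf inf_le_right (inf_le_left.trans inf_le_left))) inf_le_right
    obtain ⟨hdA, hsA⟩ := disjoint_and_sup_eq_of_sup_eq hL hLC inf_le_left hWA
    obtain ⟨hdA', hsA'⟩ := disjoint_and_sup_eq_of_sup_eq hL hLC inf_le_right hWA'
    refine ⟨L, ⟨hdA, ?_⟩, hdA', ?_⟩
    · rw [hsA, perp_inf_perp_sup_eq_perp hB hnd hA h]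
    · rw [hsA', inf_comm, perp_inf_perp_sup_eq_perp hB hnd hA' h']

end Perp

theorem stmt4_general [FiniteDimensional k V]
    (B : V →ₗ[k] V →ₗ[k] k)
    (halt : ∀ x : V, B x x = 0)
    (hnd : ∀ x : V, (∀ y : V, B x y = 0) → x = 0)
    (A A' : Submodule k V)
    (hA : A ≤ perp B A) (hA' : A' ≤ perp B A') :
    IsGood B A A' ↔ A ⊓ A' = perp B A ⊓ perp B A' ⊓ (A ⊔ A') :=
  (isGood_iff (LinearMap.IsAlt.isRefl halt) hnd hA hA').trans
    (inf_eq_inf_inf_sup_iff hA hA').symm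

/-- Let `V` be a `2n`-dimensional symplectic vector space over `k` and let
`A, A'` be `t`-dimensional isotropic subspaces (`0 ≤ t ≤ n`).  The pair `(A,A')` is good
if and only if `A ∩ A' = A^⊥ ∩ A'^⊥ ∩ (A + A')`. -/
theorem stmt4 [FiniteDimensional k V] (n t : ℕ) (hn : 1 ≤ n) (htn : t ≤ n)
    (B : V →ₗ[k] V →ₗ[k] k)
    (hdim : finrank k V = 2 * n)
    (halt : ∀ x : V, B x x = 0)
    (hnd : ∀ x : V, (∀ y : V, B x y = 0) → x = 0)
    (A A' : Submodule k V)
    (hA : A ≤ perp B A) (hA' : A' ≤ perp B A')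
    (hdA : finrank k A = t) (hdA' : finrank k A' = t) :
    IsGood B A A' ↔ A ⊓ A' = perp B A ⊓ perp B A' ⊓ (A ⊔ A') :=
  stmt4_general B halt hnd A A' hA hA'
end
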